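/- arXiv:1702.08446 — 7 statements merged into one kernel-verified Lean document; each statement's English description precedes it below -/
import Mathlib

section
/- Let (M, 𝒜, σ) be a measure space with σ a σ-finite measure, let f : M → [0,∞) be measurable, let h : M × M → [0,∞) and a : M × M → [0,1] be jointly measurable, and suppose s(x) := ∫_M a(x,y) h(x,y) σ(dy) ≤ 1 for every x ∈ M. Define the Markov transition kernel K(x, A) = ∫_A a(x,y) h(x,y) σ(dy) + (1 − s(x)) · 1_A(x) for measurable A ⊆ M. If the detailed balance condition f(x) a(x,y) h(x,y) = f(y) a(y,x) h(y,x) holds for all x, y ∈ M, then the measure f·σ is invariant for K: for every measurable set A ⊆ M, ∫_M K(x, A) f(x) σ(dx) = ∫_A f(x) σ(dx). -/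
/-!
Write `g x y = a x y * h x y` for the density of accepted moves. By Tonelli and detailed
balance, the mass that `f·σ` sends into `A` through accepted moves equals the mass that
leaves `A` through them, `∫_A f(x) s(x) σ(dx)`. The rejections keep `∫_A f(x) (1 - s(x)) σ(dx)`
in `A`, and the two add up to `∫_A f dσ` because `s ≤ 1`.
-/

open MeasureTheory Function

section DetailedBalance

variable {M : Type*} [MeasurableSpace M] {σ : Measure M}

theorem lintegral_setLIntegral_mul_eq_of_detailed_balance [SFinite σ]
    {f : M → ENNReal} {g : M → M → ENNReal} (hf : Measurable f) (hg : Measurable (uncurry g))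
    (hdb : ∀ x y, f x * g x y = f y * g y x) (A : Set M) :
    ∫⁻ x, (∫⁻ y in A, g x y ∂σ) * f x ∂σ = ∫⁻ x in A, f x * ∫⁻ y, g x y ∂σ ∂σ := calc
  ∫⁻ x, (∫⁻ y in A, g x y ∂σ) * f x ∂σ = ∫⁻ x, ∫⁻ y in A, f x * g x y ∂σ ∂σ := by
    refine lintegral_congr fun x => ?_
    rw [mul_comm, lintegral_const_mul _ hg.of_uncurry_left]
  _ = ∫⁻ y in A, ∫⁻ x, f y * g y x ∂σ ∂σ := by
    rw [lintegral_lintegral_swap ((hf.comp measurable_fst).mul hg).aemeasurable]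
    simp only [hdb]
  _ = ∫⁻ x in A, f x * ∫⁻ y, g x y ∂σ ∂σ :=
    lintegral_congr fun x => lintegral_const_mul _ hg.of_uncurry_left

theorem lintegral_mul_indicator_one_mul {A : Set M} (hA : MeasurableSet A) (F G : M → ENNReal) :
    ∫⁻ x, F x * A.indicator (fun _ => 1) x * G x ∂σ = ∫⁻ x in A, F x * G x ∂σ := by
  rw [← lintegral_indicator hA]
  refine lintegral_congr fun x => ?_
  by_cases hx : x ∈ A <;> simp [hx]

end DetailedBalance

theorem detailed_balance_implies_invariance_general
    {M : Type*} [MeasurableSpace M] (σ : Measure M) [SigmaFinite σ]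
    (f : M → ENNReal) (h a : M → M → ENNReal)
    (hf : Measurable f)
    (hh : Measurable (Function.uncurry h))
    (ha : Measurable (Function.uncurry a))
    (hs : ∀ x, (∫⁻ y, a x y * h x y ∂σ) ≤ 1)
    (hdb : ∀ x y, f x * (a x y * h x y) = f y * (a y x * h y x)) :
    ∀ A : Set M, MeasurableSet A →
      (∫⁻ x, ((∫⁻ y in A, a x y * h x y ∂σ)
          + (1 - ∫⁻ y, a x y * h x y ∂σ) * A.indicator (fun _ => 1) x) * f x ∂σ)
        = ∫⁻ x in A, f x ∂σ := by
  intro A hA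
  have hg : Measurable (uncurry fun x y => a x y * h x y) := ha.mul hh
  have hin : Measurable fun x => (∫⁻ y in A, a x y * h x y ∂σ) * f x :=
    hg.lintegral_prod_right'.mul hf
  have hout : Measurable fun x => f x * ∫⁻ y, a x y * h x y ∂σ :=
    hf.mul hg.lintegral_prod_right'
  simp only [add_mul]
  rw [lintegral_add_left hin, lintegral_setLIntegral_mul_eq_of_detailed_balance hf hg hdb,
    lintegral_mul_indicator_one_mul hA, ← lintegral_add_left hout]
  refine lintegral_congr fun x => ?_
  rw [mul_comm _ (f x), ← mul_add, add_tsub_cancel_of_le (hs x), mul_one]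

/-- If the Metropolis–Hastings kernel
`K(x, A) = ∫_A a(x,y) h(x,y) σ(dy) + (1 − s(x)) 1_A(x)` satisfies detailed balance
with respect to the density `f`, then the measure `f·σ` is invariant for `K`. -/
theorem detailed_balance_implies_invariance
    {M : Type*} [MeasurableSpace M] (σ : Measure M) [SigmaFinite σ]
    (f : M → ENNReal) (h a : M → M → ENNReal)
    (hf : Measurable f) (hffin : ∀ x, f x ≠ ⊤)
    (hh : Measurable (Function.uncurry h)) (hhfin : ∀ x y, h x y ≠ ⊤)
    (ha : Measurable (Function.uncurry a)) (ha1 : ∀ x y, a x y ≤ 1)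
    (hs : ∀ x, (∫⁻ y, a x y * h x y ∂σ) ≤ 1)
    (hdb : ∀ x y, f x * (a x y * h x y) = f y * (a y x * h y x)) :
    ∀ A : Set M, MeasurableSet A →
      (∫⁻ x, ((∫⁻ y in A, a x y * h x y ∂σ)
          + (1 - ∫⁻ y, a x y * h x y ∂σ) * A.indicator (fun _ => 1) x) * f x ∂σ)
        = ∫⁻ x in A, f x ∂σ :=
  detailed_balance_implies_invariance_general σ f h a hf hh ha hs hdb
end

section
/- Let d ≥ 3 be an integer, let 0 < R₁ < R₀, set p = (R₁/R₀)^d, and define f : (0, R₀] → ℝ by f(r) = 1 − p for r < R₁ and f(r) = −p for R₁ < r ≤ R₀. Define u : (0, R₀] → ℝ by u(r) = ((R₁^d − R₀^d)/(d R₀^d)) r² for 0 < r ≤ R₁ and u(r) = −(2 R₁^d/(d(2−d))) r^{2−d} + (R₁^d/(d R₀^d)) r² + R₁²/(2−d) for R₁ ≤ r ≤ R₀. Then u is continuously differentiable on (0, R₀], satisfies the radial ODE u''(r) + ((d−1)/r) u'(r) = −2 f(r) for every r ∈ (0, R₀) with r ≠ R₁, satisfies u'(R₀) = 0, and lim_{r→0⁺}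 u(r) = 0. -/
/-!
In radial coordinates the Laplacian of `ℝⁿ` acts as `u'' + (n - 1) u' / r`: it kills constants and
the fundamental solution `r ^ (2 - n)`, and maps `r²` to `2n`. So each piece `B r^(2-n) + C r² + D`
of `u` has Laplacian `2nC`, which is `-2f` on its side of `R₁`. The two pieces have the same slope
at `R₁` (their values agree there because both formulas define `u R₁`), so the glued function is
`C¹`; and the slope `(2 R₁^d / d) (r / R₀^d - r^(1-d))` of the outer piece vanishes at `R₀`.
-/

open Set Real Filter Topology

section Gluing

variable {f g h : ℝ → ℝ} {a : ℝ}

theorem HasDerivAt.of_nhdsLE_nhdsGE {f' : ℝ} (hg : HasDerivAt g f' a) (hh : HasDerivAt h f' a)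
    (hfg : f =ᶠ[𝓝[≤] a] g) (hfh : f =ᶠ[𝓝[≥] a] h) : HasDerivAt f f' a := by
  have := (hg.hasDerivWithinAt.congr_of_eventuallyEq_of_mem hfg self_mem_Iic).union
    (hh.hasDerivWithinAt.congr_of_eventuallyEq_of_mem hfh self_mem_Ici)
  rwa [Iic_union_Ici, hasDerivWithinAt_univ] at this

variable {s : Set ℝ}

theorem hasDerivAt_of_eqOn_Iic_of_eqOn_Ici (hs : IsOpen s) (hg : DifferentiableOn ℝ g s)
    (hh : DifferentiableOn ℝ h s) (hfg : EqOn f g (s ∩ Iic a)) (hfh : EqOn f h (s ∩ Ici a))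
    (hderiv : deriv g a = deriv h a) {x : ℝ} (hx : x ∈ s) :
    HasDerivAt f (if x ≤ a then deriv g x else deriv h x) x := by
  have hgx := (hg x hx).differentiableAt (hs.mem_nhds hx)
  have hhx := (hh x hx).differentiableAt (hs.mem_nhds hx)
  rcases lt_trichotomy x a with hxa | rfl | hxa
  · rw [if_pos hxa.le]
    refine hgx.hasDerivAt.congr_of_eventuallyEq ?_
    filter_upwards [hs.mem_nhds hx, Iic_mem_nhds hxa] with y hys hya using hfg ⟨hys, hya⟩
  · rw [if_pos le_rfl]
    refine hgx.hasDerivAt.of_nhdsLE_nhdsGE (hderiv ▸ hhx.hasDerivAt) ?_ ?_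
    · filter_upwards [self_mem_nhdsWithin, mem_nhdsWithin_of_mem_nhds (hs.mem_nhds hx)]
        with y hya hys using hfg ⟨hys, hya⟩
    · filter_upwards [self_mem_nhdsWithin, mem_nhdsWithin_of_mem_nhds (hs.mem_nhds hx)]
        with y hya hys using hfh ⟨hys, hya⟩
  · rw [if_neg hxa.not_ge]
    refine hhx.hasDerivAt.congr_of_eventuallyEq ?_
    filter_upwards [hs.mem_nhds hx, Ici_mem_nhds hxa] with y hys hya using hfh ⟨hys, hya⟩

theorem ContDiffOn.one_of_eqOn_Iic_of_eqOn_Ici (hs : IsOpen s) (hg : ContDiffOn ℝ 1 g s)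
    (hh : ContDiffOn ℝ 1 h s) (hfg : EqOn f g (s ∩ Iic a)) (hfh : EqOn f h (s ∩ Ici a))
    (hderiv : deriv g a = deriv h a) : ContDiffOn ℝ 1 f s := by
  have hasDeriv := fun x (hx : x ∈ s) => hasDerivAt_of_eqOn_Iic_of_eqOn_Ici hs
    (hg.differentiableOn one_ne_zero) (hh.differentiableOn one_ne_zero) hfg hfh hderiv hx
  have cont : ContinuousOn (fun x => if x ≤ a then deriv g x else deriv h x) s := by
    refine ContinuousOn.if (fun x hx => ?_)
      ((hg.continuousOn_deriv_of_isOpen hs le_rfl).mono inter_subset_left)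
      ((hh.continuousOn_deriv_of_isOpen hs le_rfl).mono inter_subset_left)
    obtain rfl : x = a := frontier_Iic_subset a hx.2
    exact hderiv
  rw [show (1 : WithTop ℕ∞) = 0 + 1 from rfl, contDiffOn_succ_iff_deriv_of_isOpen hs,
    contDiffOn_zero]
  exact ⟨fun x hx => (hasDeriv x hx).differentiableAt.differentiableWithinAt, by simp,
    cont.congr fun x hx => (hasDeriv x hx).deriv⟩

end Gluing

noncomputable section RadialProfile

variable (n : ℝ) {x : ℝ}

/-- The Laplacian in `ℝⁿ` of a radial function, written in the radial variable. -/
def radialLaplacian (u : ℝ → ℝ) (r : ℝ) : ℝ :=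
  deriv (deriv u) r + ((n - 1) / r) * deriv u r

theorem radialLaplacian_congr {u v : ℝ → ℝ} {r : ℝ} (h : u =ᶠ[𝓝 r] v) :
    radialLaplacian n u r = radialLaplacian n v r := by
  rw [radialLaplacian, radialLaplacian, h.deriv.deriv_eq, h.deriv_eq]

def radialProfile (B C D x : ℝ) : ℝ := B * x ^ (2 - n) + C * x ^ 2 + D

def radialProfileDeriv (B C x : ℝ) : ℝ := B * (2 - n) * x ^ (1 - n) + 2 * C * x

variable {n} (B C D : ℝ)

theorem hasDerivAt_radialProfile (hx : x ≠ 0) :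
    HasDerivAt (radialProfile n B C D) (radialProfileDeriv n B C x) x := by
  refine ((((hasDerivAt_rpow_const (Or.inl hx)).const_mul B).add
    ((hasDerivAt_pow 2 x).const_mul C)).add_const D).congr_deriv ?_
  rw [radialProfileDeriv, show (2 : ℝ) - n - 1 = 1 - n by ring]
  push_cast
  ring

theorem hasDerivAt_radialProfileDeriv (hx : x ≠ 0) :
    HasDerivAt (radialProfileDeriv n B C) (B * (2 - n) * (1 - n) * x ^ (-n) + 2 * C) x := by
  refine (((hasDerivAt_rpow_const (Or.inl hx)).const_mul (B * (2 - n))).add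
    ((hasDerivAt_id x).const_mul (2 * C))).congr_deriv ?_
  rw [show (1 : ℝ) - n - 1 = -n by ring]
  ring

theorem deriv_radialProfile (hx : x ≠ 0) :
    deriv (radialProfile n B C D) x = radialProfileDeriv n B C x :=
  (hasDerivAt_radialProfile B C D hx).deriv

theorem contDiffOn_radialProfile : ContDiffOn ℝ 1 (radialProfile n B C D) (Ioi 0) := by
  unfold radialProfile
  fun_prop (disch := exact fun x hx => ne_of_gt hx)

theorem radialLaplacian_radialProfile (hx : x ≠ 0) :
    radialLaplacian n (radialProfile n B C D) x = 2 * n * C := by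
  have hderiv : deriv (radialProfile n B C D) =ᶠ[𝓝 x] radialProfileDeriv n B C := by
    filter_upwards [eventually_ne_nhds hx] with y hy using deriv_radialProfile B C D hy
  rw [radialLaplacian, hderiv.deriv_eq, (hasDerivAt_radialProfileDeriv B C hx).deriv,
    deriv_radialProfile B C D hx, radialProfileDeriv,
    show (1 : ℝ) - n = -n + 1 by ring, rpow_add_one hx]
  field_simp
  ring

end RadialProfile

noncomputable section NeumannBall

variable (d : ℕ) (R₀ R₁ : ℝ)

def neumannInner : ℝ → ℝ :=
  radialProfile d 0 ((R₁ ^ d - R₀ ^ d) / ((d : ℝ) * R₀ ^ d)) 0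

def neumannOuter : ℝ → ℝ :=
  radialProfile d (-(2 * R₁ ^ d / ((d : ℝ) * (2 - (d : ℝ))))) (R₁ ^ d / ((d : ℝ) * R₀ ^ d))
    (R₁ ^ 2 / (2 - (d : ℝ)))

theorem neumannInner_apply (r : ℝ) :
    neumannInner d R₀ R₁ r = (R₁ ^ d - R₀ ^ d) / ((d : ℝ) * R₀ ^ d) * r ^ 2 := by
  simp [neumannInner, radialProfile]

theorem tendsto_neumannInner : Tendsto (neumannInner d R₀ R₁) (𝓝 0) (𝓝 0) := by
  rw [show neumannInner d R₀ R₁ = _ from funext (neumannInner_apply d R₀ R₁)]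
  exact (continuous_const.mul (continuous_pow 2)).tendsto' 0 0 (by simp)

variable {d R₀ R₁}

theorem deriv_neumannOuter (hd₀ : d ≠ 0) (hd₂ : d ≠ 2) {r : ℝ} (hr : 0 < r) :
    deriv (neumannOuter d R₀ R₁) r = 2 * R₁ ^ d / d * (r / R₀ ^ d - r / r ^ d) := by
  have hd₂' : (2 : ℝ) - d ≠ 0 := sub_ne_zero.mpr (by exact_mod_cast hd₂.symm)
  rw [neumannOuter, deriv_radialProfile _ _ _ hr.ne', radialProfileDeriv, rpow_sub hr, rpow_one,
    rpow_natCast]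
  field_simp
  ring

theorem deriv_neumannOuter_self (hd₀ : d ≠ 0) (hd₂ : d ≠ 2) (hR₀ : 0 < R₀) :
    deriv (neumannOuter d R₀ R₁) R₀ = 0 := by
  rw [deriv_neumannOuter hd₀ hd₂ hR₀, sub_self, mul_zero]

theorem deriv_neumannInner_eq_deriv_neumannOuter (hd₀ : d ≠ 0) (hd₂ : d ≠ 2) (hR₀ : R₀ ≠ 0)
    (hR₁ : 0 < R₁) : deriv (neumannInner d R₀ R₁) R₁ = deriv (neumannOuter d R₀ R₁) R₁ := by
  rw [deriv_neumannOuter hd₀ hd₂ hR₁, neumannInner, deriv_radialProfile _ _ _ hR₁.ne',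
    radialProfileDeriv]
  field_simp
  ring

theorem radialLaplacian_neumannInner (hd₀ : d ≠ 0) (hR₀ : R₀ ≠ 0) {r : ℝ} (hr : r ≠ 0) :
    radialLaplacian d (neumannInner d R₀ R₁) r = -2 * (1 - (R₁ / R₀) ^ d) := by
  rw [neumannInner, radialLaplacian_radialProfile _ _ _ hr, div_pow]
  field_simp
  ring

theorem radialLaplacian_neumannOuter (hd₀ : d ≠ 0) {r : ℝ} (hr : r ≠ 0) :
    radialLaplacian d (neumannOuter d R₀ R₁) r = -2 * -(R₁ / R₀) ^ d := by
  rw [neumannOuter, radialLaplacian_radialProfile _ _ _ hr, div_pow]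
  field_simp

end NeumannBall

/-- The radial function `u` solves the radial Neumann problem `u'' + ((d−1)/r) u' = −2f`
on `(0, R₀]` in dimension `d ≥ 3`, where `f = 1_{(0,R₁)} − p` with `p = (R₁/R₀)^d`. -/
theorem neumann_solution_dim_ge_three
    (d : ℕ) (hd : 3 ≤ d)
    (R₀ R₁ p : ℝ) (hR₁ : 0 < R₁) (hR : R₁ < R₀) (hp : p = (R₁ / R₀) ^ d)
    (f u : ℝ → ℝ)
    (hf_in : ∀ r : ℝ, 0 < r → r < R₁ → f r = 1 - p)
    (hf_out : ∀ r : ℝ, R₁ < r → f r = -p)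
    (hu_in : ∀ r : ℝ, 0 < r → r ≤ R₁ →
      u r = ((R₁ ^ d - R₀ ^ d) / ((d : ℝ) * R₀ ^ d)) * r ^ 2)
    (hu_out : ∀ r : ℝ, R₁ ≤ r →
      u r = -(2 * R₁ ^ d / ((d : ℝ) * (2 - (d : ℝ)))) * r ^ ((2 : ℝ) - (d : ℝ))
        + (R₁ ^ d / ((d : ℝ) * R₀ ^ d)) * r ^ 2 + R₁ ^ 2 / (2 - (d : ℝ))) :
    ContDiffOn ℝ 1 u (Set.Ioc 0 R₀) ∧
    (∀ r : ℝ, 0 < r → r < R₀ → r ≠ R₁ →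
      deriv (deriv u) r + (((d : ℝ) - 1) / r) * deriv u r = -2 * f r) ∧
    deriv u R₀ = 0 ∧
    Filter.Tendsto u (nhdsWithin 0 (Set.Ioi 0)) (nhds 0) := by
  have hR₀ : 0 < R₀ := hR₁.trans hR
  have hd₀ : d ≠ 0 := by omega
  have hd₂ : d ≠ 2 := by omega
  have hin : EqOn u (neumannInner d R₀ R₁) (Ioi 0 ∩ Iic R₁) := fun r hr =>
    (hu_in r hr.1 hr.2).trans (neumannInner_apply d R₀ R₁ r).symm
  have hout : EqOn u (neumannOuter d R₀ R₁) (Ici R₁) := hu_out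
  refine ⟨?_, fun r hr hrR₀ hrR₁ => ?_, ?_, ?_⟩
  · exact (ContDiffOn.one_of_eqOn_Iic_of_eqOn_Ici isOpen_Ioi (contDiffOn_radialProfile _ _ _)
      (contDiffOn_radialProfile _ _ _) hin (hout.mono inter_subset_right)
      (deriv_neumannInner_eq_deriv_neumannOuter hd₀ hd₂ hR₀.ne' hR₁)).mono Ioc_subset_Ioi_self
  · change radialLaplacian d u r = _
    rcases hrR₁.lt_or_gt with h | h
    · rw [radialLaplacian_congr _ (hin.eventuallyEq_of_mem
          (inter_mem (Ioi_mem_nhds hr) (Iic_mem_nhds h))),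
        radialLaplacian_neumannInner hd₀ hR₀.ne' hr.ne', hf_in r hr h, hp]
    · rw [radialLaplacian_congr _ (hout.eventuallyEq_of_mem (Ici_mem_nhds h)),
        radialLaplacian_neumannOuter hd₀ hr.ne', hf_out r h, hp]
  · rw [(hout.eventuallyEq_of_mem (Ici_mem_nhds hR)).deriv_eq,
      deriv_neumannOuter_self hd₀ hd₂ hR₀]
  · exact ((tendsto_neumannInner d R₀ R₁).mono_left nhdsWithin_le_nhds).congr'
      (hin.eventuallyEq_of_mem (inter_mem self_mem_nhdsWithin
        (mem_nhdsWithin_of_mem_nhds (Iic_mem_nhds hR₁)))).symm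
end

section
/- Let 0 < R₁ < R₀, set p = R₁/R₀ and ν = R₀/R₁ = 1/p. With f(x) = 1_{(−R₁,R₁)}(x) − p on [−R₀, R₀] and u the piecewise function u(x) = (p−1)x² for |x| ≤ R₁, u(x) = p x² − 2R₁|x| + R₁² for R₁ ≤ |x| ≤ R₀, the autocorrelation time τ = 2·((1/(2R₀)) ∫_{−R₀}^{R₀} f(x) u(x) dx)/(p(1−p)) satisfies τ = R₀² h₁(ν), where h₁(ν) = (4/3)(ν − 1)/ν². Equivalently, ∫_{−R₀}^{R₀} f(x) u(x) dx = (4/3) R₀³ p²(1−p)². -/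
/-!
Away from the points `±R₁`, the integrand `f u` is a quadratic polynomial on each of
`(-R₀, -R₁)`, `(-R₁, R₁)` and `(R₁, R₀)`, so the integral is an explicit polynomial in
`R₀, R₁, p`; substituting `R₁ = p R₀` factors it as `(4/3) R₀³ p² (1-p)²`, and the value of `τ`
is then algebra with `ν = 1/p`.
-/

open MeasureTheory Set

theorem integral_quadratic (a b c₂ c₁ c₀ : ℝ) :
    ∫ x in a..b, (c₂ * x ^ 2 + c₁ * x + c₀) =
      c₂ * (b ^ 3 - a ^ 3) / 3 + c₁ * (b ^ 2 - a ^ 2) / 2 + c₀ * (b - a) := by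
  have hcont : ∀ g : ℝ → ℝ, Continuous g → IntervalIntegrable g volume a b :=
    fun g hg => hg.intervalIntegrable a b
  rw [intervalIntegral.integral_add (hcont _ (by fun_prop)) (hcont _ (by fun_prop)),
    intervalIntegral.integral_add (hcont _ (by fun_prop)) (hcont _ (by fun_prop)),
    intervalIntegral.integral_const_mul, intervalIntegral.integral_const_mul, integral_pow,
    integral_id, intervalIntegral.integral_const, smul_eq_mul]
  ring

theorem intervalIntegrable_of_eqOn_Ioo {g q : ℝ → ℝ} {a b : ℝ} (hab : a ≤ b) (hq : Continuous q)
    (h : EqOn g q (Ioo a b)) : IntervalIntegrable g volume a b :=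
  (hq.intervalIntegrable a b).congr_uIoo (uIoo_of_le hab ▸ h.symm)

section Piecewise

variable {R₀ R₁ p : ℝ} {f u : ℝ → ℝ}

theorem mul_eqOn_Ioo_left (hR₁ : 0 < R₁) (hf_out : ∀ x : ℝ, R₁ < |x| → f x = -p)
    (hu_out : ∀ x : ℝ, R₁ ≤ |x| → u x = p * x ^ 2 - 2 * R₁ * |x| + R₁ ^ 2) :
    EqOn (fun x => f x * u x) (fun x => -p ^ 2 * x ^ 2 + -2 * p * R₁ * x + -p * R₁ ^ 2)
      (Ioo (-R₀) (-R₁)) := by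
  rintro x ⟨-, hx⟩
  have habs : |x| = -x := abs_of_neg (by linarith)
  simp only [hf_out x (by linarith), hu_out x (by linarith), habs]
  ring

theorem mul_eqOn_Ioo_center (hf_in : ∀ x : ℝ, |x| < R₁ → f x = 1 - p)
    (hu_in : ∀ x : ℝ, |x| ≤ R₁ → u x = (p - 1) * x ^ 2) :
    EqOn (fun x => f x * u x) (fun x => -(1 - p) ^ 2 * x ^ 2 + 0 * x + 0) (Ioo (-R₁) R₁) := by
  rintro x ⟨hx₁, hx₂⟩
  have habs : |x| < R₁ := abs_lt.mpr ⟨hx₁, hx₂⟩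
  simp only [hf_in x habs, hu_in x habs.le]
  ring

theorem mul_eqOn_Ioo_right (hR₁ : 0 < R₁) (hf_out : ∀ x : ℝ, R₁ < |x| → f x = -p)
    (hu_out : ∀ x : ℝ, R₁ ≤ |x| → u x = p * x ^ 2 - 2 * R₁ * |x| + R₁ ^ 2) :
    EqOn (fun x => f x * u x) (fun x => -p ^ 2 * x ^ 2 + 2 * p * R₁ * x + -p * R₁ ^ 2)
      (Ioo R₁ R₀) := by
  rintro x ⟨hx, -⟩
  have habs : |x| = x := abs_of_pos (by linarith)
  simp only [hf_out x (by linarith), hu_out x (by linarith), habs]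
  ring

theorem integral_mul_eq (hR₁ : 0 < R₁) (hR : R₁ < R₀) (hp : p = R₁ / R₀)
    (hf_in : ∀ x : ℝ, |x| < R₁ → f x = 1 - p)
    (hf_out : ∀ x : ℝ, R₁ < |x| → f x = -p)
    (hu_in : ∀ x : ℝ, |x| ≤ R₁ → u x = (p - 1) * x ^ 2)
    (hu_out : ∀ x : ℝ, R₁ ≤ |x| → u x = p * x ^ 2 - 2 * R₁ * |x| + R₁ ^ 2) :
    ∫ x in (-R₀)..R₀, f x * u x = (4 / 3) * R₀ ^ 3 * p ^ 2 * (1 - p) ^ 2 := by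
  have hleft := mul_eqOn_Ioo_left (R₀ := R₀) hR₁ hf_out hu_out
  have hcenter := mul_eqOn_Ioo_center hf_in hu_in
  have hright := mul_eqOn_Ioo_right (R₀ := R₀) hR₁ hf_out hu_out
  have h₁ : -R₀ ≤ -R₁ := by linarith
  have h₂ : -R₁ ≤ R₁ := by linarith
  have h₃ : R₁ ≤ R₀ := hR.le
  have hi₁ := intervalIntegrable_of_eqOn_Ioo h₁ (by fun_prop) hleft
  have hi₂ := intervalIntegrable_of_eqOn_Ioo h₂ (by fun_prop) hcenter
  have hi₃ := intervalIntegrable_of_eqOn_Ioo h₃ (by fun_prop) hright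
  have hR₁p : R₁ = p * R₀ := by rw [hp, div_mul_cancel₀ _ (by linarith)]
  rw [← intervalIntegral.integral_add_adjacent_intervals (hi₁.trans hi₂) hi₃,
    ← intervalIntegral.integral_add_adjacent_intervals hi₁ hi₂,
    intervalIntegral.integral_congr_Ioo_of_le h₁ hleft,
    intervalIntegral.integral_congr_Ioo_of_le h₂ hcenter,
    intervalIntegral.integral_congr_Ioo_of_le h₃ hright,
    integral_quadratic, integral_quadratic, integral_quadratic, hR₁p]
  ring

end Piecewise

theorem autocorrelation_time_eq {R₀ p ν I : ℝ} (hR₀ : R₀ ≠ 0) (hp₀ : p ≠ 0) (hp₁ : p ≠ 1)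
    (hν : ν = 1 / p) (hI : I = (4 / 3) * R₀ ^ 3 * p ^ 2 * (1 - p) ^ 2) :
    2 * ((1 / (2 * R₀)) * I) / (p * (1 - p)) = R₀ ^ 2 * ((4 / 3) * (ν - 1) / ν ^ 2) := by
  have : 1 - p ≠ 0 := sub_ne_zero.mpr hp₁.symm
  subst hν hI
  field_simp

/-- For reflected Brownian motion on the interval `[−R₀, R₀]`, the autocorrelation time of
the indicator of `(−R₁, R₁)` equals `R₀² h₁(ν)` with `h₁(ν) = (4/3)(ν−1)/ν²`, `ν = R₀/R₁`;
equivalently `∫ f u = (4/3) R₀³ p² (1−p)²`. -/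
theorem brownian_autocorrelation_dim_one
    (R₀ R₁ p ν : ℝ) (hR₁ : 0 < R₁) (hR : R₁ < R₀)
    (hp : p = R₁ / R₀) (hν : ν = R₀ / R₁)
    (f u : ℝ → ℝ)
    (hf_in : ∀ x : ℝ, |x| < R₁ → f x = 1 - p)
    (hf_out : ∀ x : ℝ, R₁ < |x| → f x = -p)
    (hu_in : ∀ x : ℝ, |x| ≤ R₁ → u x = (p - 1) * x ^ 2)
    (hu_out : ∀ x : ℝ, R₁ ≤ |x| → u x = p * x ^ 2 - 2 * R₁ * |x| + R₁ ^ 2) :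
    (∫ x in (-R₀)..R₀, f x * u x) = (4 / 3) * R₀ ^ 3 * p ^ 2 * (1 - p) ^ 2 ∧
    2 * ((1 / (2 * R₀)) * ∫ x in (-R₀)..R₀, f x * u x) / (p * (1 - p))
      = R₀ ^ 2 * ((4 / 3) * (ν - 1) / ν ^ 2) := by
  have hR₀ : 0 < R₀ := hR₁.trans hR
  have hI := integral_mul_eq hR₁ hR hp hf_in hf_out hu_in hu_out
  refine ⟨hI, autocorrelation_time_eq hR₀.ne' ?_ ?_ ?_ hI⟩
  · rw [hp]; positivity
  · rw [hp]; exact ((div_lt_one hR₀).mpr hR).ne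
  · rw [hν, hp, one_div_div]
end

section
/- Let 0 < R₁ < R₀, set p = (R₁/R₀)² and ν = (R₀/R₁)² = 1/p. With f(r) = 1_{(0,R₁)}(r) − p and u(r) = ((R₁² − R₀²)/(2R₀²)) r² for 0 < r ≤ R₁, u(r) = R₁²(log R₁ − log r) + (R₁²/2)(r²/R₀² − 1) for R₁ ≤ r ≤ R₀, the autocorrelation time τ = 2·((2/R₀²) ∫₀^{R₀} f(r) u(r) r dr)/(p(1−p)) satisfies τ = R₀² h₂(ν), where h₂(ν) = (ν^{−1} − 1 + log ν)/(ν − 1). -/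
/-!
With `a = R₁²`, `b = R₀²` the integrand `f u r` is `(1 - p) (a - b)/(2b) · r³` on `(0, R₁)` and a
combination of `r`, `r³` and `r log r` on `(R₁, R₀)`, so both pieces are elementary; adding them gives
`∫₀^{R₀} f u r dr = (R₁⁴/4)(ν⁻¹ - 1 + log ν)`. Since `p (1 - p) = (ν - 1)/ν²` and `R₁⁴ ν² = R₀⁴`,
dividing gives `R₀² h₂(ν)`.
-/

open Real Set intervalIntegral
open scoped Interval

theorem integral_mul_log {a b : ℝ} (h : (0 : ℝ) ∉ [[a, b]]) :
    ∫ x in a..b, x * log x = (b ^ 2 * log b - a ^ 2 * log a) / 2 - (b ^ 2 - a ^ 2) / 4 := by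
  have hderiv : ∀ x ∈ [[a, b]],
      HasDerivAt (fun x => x ^ 2 / 2 * log x - x ^ 2 / 4) (x * log x) x := by
    intro x hx
    have hx0 : x ≠ 0 := fun hx0 => h (hx0 ▸ hx)
    refine ((((hasDerivAt_pow 2 x).div_const 2).mul (hasDerivAt_log hx0)).sub
      ((hasDerivAt_pow 2 x).div_const 4)).congr_deriv ?_
    field_simp
    ring
  rw [integral_eq_sub_of_hasDerivAt hderiv (continuous_mul_log.intervalIntegrable _ _)]
  ring

section RadialIntegrand

variable {R₀ R₁ : ℝ} {f u : ℝ → ℝ}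

theorem eqOn_Ioo_integrand_inner {α β : ℝ} (hf : ∀ r, 0 < r → r < R₁ → f r = α)
    (hu : ∀ r, 0 < r → r ≤ R₁ → u r = β * r ^ 2) :
    EqOn (fun r => f r * u r * r) (fun r => α * β * r ^ 3) (Ioo 0 R₁) := by
  intro r ⟨hr₀, hr₁⟩
  simp only [hf r hr₀ hr₁, hu r hr₀ hr₁.le]
  ring

theorem eqOn_Ioo_integrand_outer {p : ℝ} (hf : ∀ r, R₁ < r → f r = -p)
    (hu : ∀ r, R₁ ≤ r →
      u r = R₁ ^ 2 * (log R₁ - log r) + (R₁ ^ 2 / 2) * (r ^ 2 / R₀ ^ 2 - 1)) :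
    EqOn (fun r => f r * u r * r)
      (fun r => -p * (R₁ ^ 2 * (r * log R₁ - r * log r) + R₁ ^ 2 / 2 * (r ^ 3 / R₀ ^ 2 - r)))
      (Ioo R₁ R₀) := by
  intro r ⟨hr₁, _⟩
  simp only [hf r hr₁, hu r hr₁.le]
  ring

theorem integral_source_mul_potential {p ν : ℝ} (hR₁ : 0 < R₁) (hR : R₁ < R₀)
    (hp : p = (R₁ / R₀) ^ 2) (hν : ν = (R₀ / R₁) ^ 2)
    (hf_in : ∀ r, 0 < r → r < R₁ → f r = 1 - p) (hf_out : ∀ r, R₁ < r → f r = -p)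
    (hu_in : ∀ r, 0 < r → r ≤ R₁ → u r = ((R₁ ^ 2 - R₀ ^ 2) / (2 * R₀ ^ 2)) * r ^ 2)
    (hu_out : ∀ r, R₁ ≤ r →
      u r = R₁ ^ 2 * (log R₁ - log r) + (R₁ ^ 2 / 2) * (r ^ 2 / R₀ ^ 2 - 1)) :
    ∫ r in (0 : ℝ)..R₀, f r * u r * r = R₁ ^ 4 / 4 * (ν⁻¹ - 1 + log ν) := by
  have hR₀ : 0 < R₀ := hR₁.trans hR
  have h_in := eqOn_Ioo_integrand_inner hf_in hu_in
  have h_out := eqOn_Ioo_integrand_outer (R₀ := R₀) hf_out hu_out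
  have hint_in : IntervalIntegrable (fun r => f r * u r * r) MeasureTheory.volume 0 R₁ :=
    (Continuous.intervalIntegrable (by fun_prop) _ _).congr_uIoo (uIoo_of_le hR₁.le ▸ h_in.symm)
  have hint_out : IntervalIntegrable (fun r => f r * u r * r) MeasureTheory.volume R₁ R₀ :=
    (Continuous.intervalIntegrable (by fun_prop) _ _).congr_uIoo (uIoo_of_le hR.le ▸ h_out.symm)
  have h0 : (0 : ℝ) ∉ [[R₁, R₀]] := by
    rw [uIcc_of_le hR.le]
    exact fun h => hR₁.not_ge h.1
  have hlog_ν : log ν = 2 * (log R₀ - log R₁) := by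
    rw [hν, log_pow, log_div hR₀.ne' hR₁.ne']
    push_cast
    ring
  rw [← integral_add_adjacent_intervals hint_in hint_out, integral_congr_Ioo_of_le hR₁.le h_in,
    integral_congr_Ioo_of_le hR.le h_out]
  simp (disch := exact Continuous.intervalIntegrable (by fun_prop) _ _) only [integral_add,
    integral_sub, integral_const_mul, integral_mul_const, integral_div, integral_mul_log h0,
    integral_pow, integral_id]
  rw [hlog_ν, hν, hp]
  field_simp
  ring

end RadialIntegrand

/-- For reflected Brownian motion on the disk of radius `R₀` in `ℝ²`, the autocorrelation
time of the indicator of the concentric disk of radius `R₁` equals `R₀² h₂(ν)` with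
`h₂(ν) = (ν⁻¹ − 1 + log ν)/(ν − 1)` and `ν = (R₀/R₁)²`. -/
theorem brownian_autocorrelation_dim_two
    (R₀ R₁ p ν : ℝ) (hR₁ : 0 < R₁) (hR : R₁ < R₀)
    (hp : p = (R₁ / R₀) ^ 2) (hν : ν = (R₀ / R₁) ^ 2)
    (f u : ℝ → ℝ)
    (hf_in : ∀ r : ℝ, 0 < r → r < R₁ → f r = 1 - p)
    (hf_out : ∀ r : ℝ, R₁ < r → f r = -p)
    (hu_in : ∀ r : ℝ, 0 < r → r ≤ R₁ → u r = ((R₁ ^ 2 - R₀ ^ 2) / (2 * R₀ ^ 2)) * r ^ 2)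
    (hu_out : ∀ r : ℝ, R₁ ≤ r →
      u r = R₁ ^ 2 * (Real.log R₁ - Real.log r) + (R₁ ^ 2 / 2) * (r ^ 2 / R₀ ^ 2 - 1)) :
    2 * ((2 / R₀ ^ 2) * ∫ r in (0 : ℝ)..R₀, f r * u r * r) / (p * (1 - p))
      = R₀ ^ 2 * ((ν⁻¹ - 1 + Real.log ν) / (ν - 1)) := by
  rw [integral_source_mul_potential hR₁ hR hp hν hf_in hf_out hu_in hu_out]
  generalize ν⁻¹ - 1 + log ν = X
  have hR₀ : R₀ ≠ 0 := (hR₁.trans hR).ne'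
  have hsq : R₀ ^ 2 - R₁ ^ 2 ≠ 0 := (sub_pos.2 (pow_lt_pow_left₀ hR hR₁.le two_ne_zero)).ne'
  subst hp hν
  field_simp
  ring
end

section
/- Let d ≥ 3 be an integer, let 0 < R₁ < R₀, set p = (R₁/R₀)^d and ν = (R₀/R₁)^d = 1/p. With f(r) = 1_{(0,R₁)}(r) − p and u(r) = ((R₁^d − R₀^d)/(d R₀^d)) r² for 0 < r ≤ R₁, u(r) = −(2R₁^d/(d(2−d))) r^{2−d} + (R₁^d/(dR₀^d)) r² + R₁²/(2−d) for R₁ ≤ r ≤ R₀, the autocorrelation time τ = 2·((d/R₀^d) ∫₀^{R₀} f(r) u(r) r^{d−1} dr)/(p(1−p)) satisfies τ = R₀² h_d(ν), where h_d(ν) = (4/(d²−4)) · ((d−2)ν^{−1} − d ν^{2/d − 1} + 2)/(ν^{2/d}(1 − ν^{−1})). -/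
/-!
On each of the intervals `0 < r < R₁` and `R₁ < r < R₀` the functions `f` and `u` are explicit,
and `f u r^{d-1}` is a polynomial in `r`: the only non-polynomial term of `u`, the multiple of
`r^{2-d}`, becomes `r` after multiplication by the volume factor `r^{d-1}`. Integrating the two
polynomials gives `∫₀^{R₀} f u r^{d-1} dr` in closed form. Since `ν⁻¹ = p` and
`ν^{2/d} = (R₀/R₁)²`, the claim is then a rational identity in `R₀`, `R₁`, `p` and `d`.
-/

open MeasureTheory Set

theorem intervalIntegral.integral_eq_add_of_eqOn_Ioo {E : Type*} [NormedAddCommGroup E]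
    [NormedSpace ℝ E] {μ : Measure ℝ} [NullSingletonClass μ] {F g h : ℝ → E} {a b c : ℝ}
    (hab : a ≤ b) (hbc : b ≤ c) (hg : IntervalIntegrable g μ a b)
    (hh : IntervalIntegrable h μ b c) (hFg : EqOn F g (Ioo a b)) (hFh : EqOn F h (Ioo b c)) :
    ∫ x in a..c, F x ∂μ = (∫ x in a..b, g x ∂μ) + ∫ x in b..c, h x ∂μ := by
  rw [← integral_add_adjacent_intervals (hg.congr_uIoo (uIoo_of_le hab ▸ hFg.symm))
      (hh.congr_uIoo (uIoo_of_le hbc ▸ hFh.symm)),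
    integral_congr_Ioo_of_le hab hFg, integral_congr_Ioo_of_le hbc hFh]

theorem Real.rpow_two_sub_natCast_mul_pow_sub_one {x : ℝ} (hx : 0 < x) {d : ℕ} (hd : 1 ≤ d) :
    x ^ ((2 : ℝ) - d) * x ^ (d - 1) = x := by
  rw [← Real.rpow_natCast x (d - 1), ← Real.rpow_add hx, Nat.cast_sub hd]
  norm_num

theorem Real.pow_rpow_two_div_natCast {x : ℝ} (hx : 0 ≤ x) {d : ℕ} (hd : d ≠ 0) :
    (x ^ d) ^ (2 / (d : ℝ)) = x ^ 2 := by
  rw [div_eq_inv_mul, Real.rpow_mul (pow_nonneg hx d), Real.pow_rpow_inv_natCast hx hd]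
  norm_cast

section CovarianceIntegral

variable {d : ℕ} {R₀ R₁ p : ℝ} {f u : ℝ → ℝ}

theorem covariance_integrand_eqOn_inner (hd : 1 ≤ d)
    (hf_in : ∀ r : ℝ, 0 < r → r < R₁ → f r = 1 - p)
    (hu_in : ∀ r : ℝ, 0 < r → r ≤ R₁ →
      u r = ((R₁ ^ d - R₀ ^ d) / ((d : ℝ) * R₀ ^ d)) * r ^ 2) :
    EqOn (fun r ↦ f r * u r * r ^ (d - 1))
      (fun r ↦ (1 - p) * ((R₁ ^ d - R₀ ^ d) / ((d : ℝ) * R₀ ^ d)) * r ^ (d + 1)) (Ioo 0 R₁) := by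
  rintro r ⟨hr₀, hr₁⟩
  simp only [hf_in r hr₀ hr₁, hu_in r hr₀ hr₁.le]
  rw [show d + 1 = 2 + (d - 1) by omega, pow_add]
  ring

theorem covariance_integrand_eqOn_outer (hd : 1 ≤ d) (hR₁ : 0 < R₁)
    (hf_out : ∀ r : ℝ, R₁ < r → f r = -p)
    (hu_out : ∀ r : ℝ, R₁ ≤ r →
      u r = -(2 * R₁ ^ d / ((d : ℝ) * (2 - (d : ℝ)))) * r ^ ((2 : ℝ) - (d : ℝ))
        + (R₁ ^ d / ((d : ℝ) * R₀ ^ d)) * r ^ 2 + R₁ ^ 2 / (2 - (d : ℝ))) :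
    EqOn (fun r ↦ f r * u r * r ^ (d - 1))
      (fun r ↦ -p * (-(2 * R₁ ^ d / ((d : ℝ) * (2 - (d : ℝ)))) * r
        + (R₁ ^ d / ((d : ℝ) * R₀ ^ d)) * r ^ (d + 1) + R₁ ^ 2 / (2 - (d : ℝ)) * r ^ (d - 1)))
      (Ioo R₁ R₀) := by
  rintro r ⟨hr₁, -⟩
  have hr : r ^ ((2 : ℝ) - d) * r ^ (d - 1) = r :=
    Real.rpow_two_sub_natCast_mul_pow_sub_one (hR₁.trans hr₁) hd
  simp only [hf_out r hr₁, hu_out r hr₁.le]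
  rw [show d + 1 = 2 + (d - 1) by omega, pow_add]
  linear_combination (-p * -(2 * R₁ ^ d / ((d : ℝ) * (2 - (d : ℝ))))) * hr

theorem integral_covariance_integrand (hd : 3 ≤ d) (hR₁ : 0 < R₁) (hR : R₁ < R₀)
    (hp : p = (R₁ / R₀) ^ d)
    (hf_in : ∀ r : ℝ, 0 < r → r < R₁ → f r = 1 - p)
    (hf_out : ∀ r : ℝ, R₁ < r → f r = -p)
    (hu_in : ∀ r : ℝ, 0 < r → r ≤ R₁ →
      u r = ((R₁ ^ d - R₀ ^ d) / ((d : ℝ) * R₀ ^ d)) * r ^ 2)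
    (hu_out : ∀ r : ℝ, R₁ ≤ r →
      u r = -(2 * R₁ ^ d / ((d : ℝ) * (2 - (d : ℝ)))) * r ^ ((2 : ℝ) - (d : ℝ))
        + (R₁ ^ d / ((d : ℝ) * R₀ ^ d)) * r ^ 2 + R₁ ^ 2 / (2 - (d : ℝ))) :
    ∫ r in (0 : ℝ)..R₀, f r * u r * r ^ (d - 1)
      = 2 * R₁ ^ d * (2 * R₁ ^ 2 + (d - 2) * p * R₁ ^ 2 - d * p * R₀ ^ 2)
          / (d * ((d : ℝ) ^ 2 - 4)) := by
  rw [intervalIntegral.integral_eq_add_of_eqOn_Ioo hR₁.le hR.le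
    (Continuous.intervalIntegrable (by fun_prop) _ _)
    (Continuous.intervalIntegrable (by fun_prop) _ _)
    (covariance_integrand_eqOn_inner (by omega) hf_in hu_in)
    (covariance_integrand_eqOn_outer (by omega) hR₁ hf_out hu_out)]
  -- `integral_const_mul` needs its `f = id` instance spelled out: `simp` does not unify `?f x =?= x`.
  simp (disch := apply Continuous.intervalIntegrable; fun_prop) only
    [intervalIntegral.integral_add, mul_add, intervalIntegral.integral_const_mul,
    intervalIntegral.integral_const_mul _ fun x : ℝ ↦ x, integral_pow, integral_id,
    Nat.sub_add_cancel (by omega : 1 ≤ d), Nat.cast_pred (by omega : 0 < d), sub_add_cancel]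
  have hR₀ : R₀ ≠ 0 := (hR₁.trans hR).ne'
  have hd₃ : (3 : ℝ) ≤ d := by exact_mod_cast hd
  have hd₂ : (2 : ℝ) - d ≠ 0 := by linarith
  have hd₄ : (d : ℝ) ^ 2 - 4 ≠ 0 := by nlinarith
  rw [hp, div_pow]
  push_cast
  field_simp
  ring

end CovarianceIntegral

/-- For reflected Brownian motion on the ball of radius `R₀` in `ℝ^d`, `d ≥ 3`, the
autocorrelation time of the indicator of the concentric ball of radius `R₁` equals
`R₀² h_d(ν)` with `h_d(ν) = (4/(d²−4)) ((d−2)ν⁻¹ − d ν^{2/d−1} + 2)/(ν^{2/d}(1 − ν⁻¹))`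
and `ν = (R₀/R₁)^d`. -/
theorem brownian_autocorrelation_dim_ge_three
    (d : ℕ) (hd : 3 ≤ d)
    (R₀ R₁ p ν : ℝ) (hR₁ : 0 < R₁) (hR : R₁ < R₀)
    (hp : p = (R₁ / R₀) ^ d) (hν : ν = (R₀ / R₁) ^ d)
    (f u : ℝ → ℝ)
    (hf_in : ∀ r : ℝ, 0 < r → r < R₁ → f r = 1 - p)
    (hf_out : ∀ r : ℝ, R₁ < r → f r = -p)
    (hu_in : ∀ r : ℝ, 0 < r → r ≤ R₁ →
      u r = ((R₁ ^ d - R₀ ^ d) / ((d : ℝ) * R₀ ^ d)) * r ^ 2)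
    (hu_out : ∀ r : ℝ, R₁ ≤ r →
      u r = -(2 * R₁ ^ d / ((d : ℝ) * (2 - (d : ℝ)))) * r ^ ((2 : ℝ) - (d : ℝ))
        + (R₁ ^ d / ((d : ℝ) * R₀ ^ d)) * r ^ 2 + R₁ ^ 2 / (2 - (d : ℝ))) :
    2 * (((d : ℝ) / R₀ ^ d) * ∫ r in (0 : ℝ)..R₀, f r * u r * r ^ (d - 1)) / (p * (1 - p))
      = R₀ ^ 2 * ((4 / ((d : ℝ) ^ 2 - 4))
          * (((d : ℝ) - 2) * ν⁻¹ - (d : ℝ) * ν ^ (2 / (d : ℝ) - 1) + 2)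
          / (ν ^ (2 / (d : ℝ)) * (1 - ν⁻¹))) := by
  have hR₀ : 0 < R₀ := hR₁.trans hR
  have hν₀ : ν ≠ 0 := by rw [hν]; positivity
  have hν_inv : ν⁻¹ = p := by rw [hν, hp, ← inv_pow, inv_div]
  have hν_two_div : ν ^ (2 / (d : ℝ)) = (R₀ / R₁) ^ 2 := by
    rw [hν]; exact Real.pow_rpow_two_div_natCast (by positivity) (by omega)
  have hp₁ : 1 - p ≠ 0 := by
    rw [hp, sub_ne_zero]
    exact (pow_lt_one₀ (by positivity) ((div_lt_one hR₀).mpr hR) (by omega)).ne'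
  have hp₀ : p ≠ 0 := by rw [hp]; positivity
  have hd₃ : (3 : ℝ) ≤ d := by exact_mod_cast hd
  have hd₄ : (d : ℝ) ^ 2 - 4 ≠ 0 := by nlinarith
  have hR₁d : R₁ ^ d = p * R₀ ^ d := by rw [hp, div_pow]; field_simp
  rw [integral_covariance_integrand hd hR₁ hR hp hf_in hf_out hu_in hu_out,
    Real.rpow_sub_one hν₀, hν_two_div, div_eq_mul_inv _ ν, hν_inv, hR₁d]
  field_simp
  ring
end

section
/- Consider the function g(ν) = (ν − 1)/(log ν)² on the interval (1, ∞). Then g attains a global minimum at a unique point ν* ∈ (1, ∞); this minimizer is the unique solution in (1, ∞) of the equation ν log ν = 2(ν − 1), and it satisfies 4.9 < ν* < 5. -/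
/-!
With `h ν = ν log ν - 2(ν - 1)` one has `g' = h / (ν log³ ν)`. The function `h` is strictly
convex (it is `ν log ν` minus an affine function) and vanishes at `1`, so it has at most one
further zero `ν*` on `(1, ∞)`, is negative on `(1, ν*)` and positive beyond; such a zero exists
in `(4.9, 5)` by the intermediate value theorem. Hence `g` decreases strictly up to `ν*` and
increases strictly after it.
-/

open Real Set

theorem StrictConvexOn.neg_of_lt_of_lt_of_eq_zero {f : ℝ → ℝ} {s : Set ℝ}
    (hf : StrictConvexOn ℝ s f) {a c x : ℝ} (ha : a ∈ s) (hc : c ∈ s) (hfa : f a = 0)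
    (hfc : f c = 0) (hax : a < x) (hxc : x < c) : f x < 0 := by
  have hx : x ∈ s := hf.1.ordConnected.out ha hc ⟨hax.le, hxc.le⟩
  have hslope := hf.secant_strict_mono ha hx hc hax.ne' (hax.trans hxc).ne' hxc
  rwa [hfa, hfc, sub_zero, sub_zero, zero_div, div_lt_iff₀ (sub_pos.2 hax), zero_mul] at hslope

theorem StrictConvexOn.pos_of_lt_of_lt_of_eq_zero {f : ℝ → ℝ} {s : Set ℝ}
    (hf : StrictConvexOn ℝ s f) {a c x : ℝ} (ha : a ∈ s) (hc : c ∈ s) (hx : x ∈ s)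
    (hfa : f a = 0) (hfc : f c = 0) (hac : a < c) (hcx : c < x) : 0 < f x := by
  have hslope := hf.secant_strict_mono ha hc hx hac.ne' (hac.trans hcx).ne' hcx
  rw [hfa, hfc, sub_zero, sub_zero, zero_div] at hslope
  exact (div_pos_iff_of_pos_right (sub_pos.2 (hac.trans hcx))).1 hslope

namespace MultiPhase

noncomputable def g (ν : ℝ) : ℝ := (ν - 1) / log ν ^ 2

noncomputable def h (ν : ℝ) : ℝ := ν * log ν - 2 * (ν - 1)

theorem continuous_h : Continuous h := by
  unfold h; fun_prop

theorem h_one : h 1 = 0 := by simp [h]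

theorem strictConvexOn_h : StrictConvexOn ℝ (Ici 0) h := by
  refine strictConvexOn_mul_log.sub_concaveOn ⟨convex_Ici 0, fun x _ y _ a b _ _ hab => ?_⟩
  refine le_of_eq ?_
  simp only [smul_eq_mul]
  linear_combination (-2) * hab

theorem h_neg_of_lt {ν' x : ℝ} (hν'h : h ν' = 0) (hx : 1 < x) (hxν' : x < ν') : h x < 0 :=
  strictConvexOn_h.neg_of_lt_of_lt_of_eq_zero (mem_Ici.2 zero_le_one) (mem_Ici.2 (by linarith))
    h_one hν'h hx hxν'

theorem h_pos_of_gt {ν' x : ℝ} (hν' : 1 < ν') (hν'h : h ν' = 0) (hν'x : ν' < x) :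
    0 < h x :=
  strictConvexOn_h.pos_of_lt_of_lt_of_eq_zero (mem_Ici.2 zero_le_one) (mem_Ici.2 (by linarith))
    (mem_Ici.2 (by linarith)) h_one hν'h hν' hν'x

theorem eq_of_h_eq_zero {ν' x : ℝ} (hν' : 1 < ν') (hν'h : h ν' = 0) (hx : 1 < x)
    (hxh : h x = 0) : x = ν' := by
  rcases lt_trichotomy x ν' with hlt | heq | hgt
  · exact absurd hxh (h_neg_of_lt hν'h hx hlt).ne
  · exact heq
  · exact absurd hxh (h_pos_of_gt hν' hν'h hgt).ne'

theorem hasDerivAt_g {x : ℝ} (hx : 1 < x) : HasDerivAt g (h x / (x * log x ^ 3)) x := by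
  have hlog : 0 < log x := log_pos hx
  have hnum : HasDerivAt (fun y : ℝ => y - 1) 1 x := (hasDerivAt_id x).sub_const 1
  have hden : HasDerivAt (fun y : ℝ => log y ^ 2) (2 * log x ^ 1 * x⁻¹) x :=
    (hasDerivAt_log (by positivity)).pow 2
  refine (hnum.div hden (by positivity)).congr_deriv ?_
  unfold h
  field_simp

theorem continuousOn_g : ContinuousOn g (Ioi 1) :=
  fun _ hx => (hasDerivAt_g hx).continuousAt.continuousWithinAt

theorem strictAntiOn_g {ν' : ℝ} (hν'h : h ν' = 0) : StrictAntiOn g (Ioc 1 ν') := by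
  refine strictAntiOn_of_deriv_neg (convex_Ioc 1 ν') (continuousOn_g.mono Ioc_subset_Ioi_self) ?_
  rw [interior_Ioc]
  intro x ⟨hx1, hxν'⟩
  rw [(hasDerivAt_g hx1).deriv]
  have := log_pos hx1
  exact div_neg_of_neg_of_pos (h_neg_of_lt hν'h hx1 hxν') (by positivity)

theorem strictMonoOn_g {ν' : ℝ} (hν' : 1 < ν') (hν'h : h ν' = 0) :
    StrictMonoOn g (Ici ν') := by
  refine strictMonoOn_of_deriv_pos (convex_Ici ν')
    (continuousOn_g.mono fun _ hx => hν'.trans_le hx) ?_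
  rw [interior_Ici]
  intro x hν'x
  have hx1 : 1 < x := hν'.trans hν'x
  rw [(hasDerivAt_g hx1).deriv]
  have := log_pos hx1
  exact div_pos (h_pos_of_gt hν' hν'h hν'x) (by positivity)

theorem g_lt_of_ne {ν' x : ℝ} (hν' : 1 < ν') (hν'h : h ν' = 0) (hx : 1 < x)
    (hne : x ≠ ν') : g ν' < g x := by
  rcases hne.lt_or_gt with hlt | hgt
  · exact strictAntiOn_g hν'h ⟨hx, hlt.le⟩ ⟨hν', le_rfl⟩ hlt
  · exact strictMonoOn_g hν' hν'h (mem_Ici.2 le_rfl) hgt.le hgt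

theorem h_lt_zero_at_four_point_nine : h 4.9 < 0 := by
  have hlog : log 4.9 < 78 / 49 := by
    rw [log_lt_iff_lt_exp (by norm_num)]
    have hpow : exp (78 / 49) ^ 49 = exp 1 ^ 78 := by
      rw [← exp_nat_mul, ← exp_nat_mul]; norm_num
    refine lt_of_pow_lt_pow_left₀ 49 (exp_pos _).le ?_
    rw [hpow]
    calc (4.9 : ℝ) ^ 49 < 2.7182818283 ^ 78 := by norm_num
      _ < exp 1 ^ 78 := pow_lt_pow_left₀ exp_one_gt_d9 (by norm_num) (by norm_num)
  unfold h
  nlinarith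

theorem h_five_pos : 0 < h 5 := by
  have hlog : 8 / 5 < log 5 := by
    rw [lt_log_iff_exp_lt (by norm_num)]
    have hpow : exp (8 / 5) ^ 5 = exp 1 ^ 8 := by
      rw [← exp_nat_mul, ← exp_nat_mul]; norm_num
    refine lt_of_pow_lt_pow_left₀ 5 (by norm_num) ?_
    rw [hpow]
    calc exp 1 ^ 8 < 2.7182818286 ^ 8 :=
          pow_lt_pow_left₀ exp_one_lt_d9 (exp_pos 1).le (by norm_num)
      _ < 5 ^ 5 := by norm_num
  unfold h
  linarith

theorem exists_h_eq_zero_mem_Ioo : ∃ ν ∈ Ioo (4.9 : ℝ) 5, h ν = 0 :=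
  intermediate_value_Ioo (by norm_num) continuous_h.continuousOn
    ⟨h_lt_zero_at_four_point_nine, h_five_pos⟩

end MultiPhase

/-- The function `g(ν) = (ν − 1)/(log ν)²` on `(1, ∞)` attains its global minimum at a
unique point `ν*`, which is the unique solution in `(1, ∞)` of `ν log ν = 2(ν − 1)` and
satisfies `4.9 < ν* < 5`. -/
theorem g_unique_minimizer :
    ∃ ν' : ℝ, 1 < ν' ∧
      (∀ ν : ℝ, 1 < ν → (ν' - 1) / Real.log ν' ^ 2 ≤ (ν - 1) / Real.log ν ^ 2) ∧
      (∀ μ : ℝ, 1 < μ →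
        (∀ ν : ℝ, 1 < ν → (μ - 1) / Real.log μ ^ 2 ≤ (ν - 1) / Real.log ν ^ 2) → μ = ν') ∧
      ν' * Real.log ν' = 2 * (ν' - 1) ∧
      (∀ μ : ℝ, 1 < μ → μ * Real.log μ = 2 * (μ - 1) → μ = ν') ∧
      4.9 < ν' ∧ ν' < 5 := by
  obtain ⟨ν', ⟨hlow, hupp⟩, hν'h⟩ := MultiPhase.exists_h_eq_zero_mem_Ioo
  have hν' : (1 : ℝ) < ν' := by linarith
  refine ⟨ν', hν', fun ν hν => ?_, fun μ hμ hmin => ?_, sub_eq_zero.1 hν'h,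
    fun μ hμ hμh => MultiPhase.eq_of_h_eq_zero hν' hν'h hμ (sub_eq_zero.2 hμh), hlow, hupp⟩
  · rcases eq_or_ne ν ν' with rfl | hne
    · exact le_rfl
    · exact (MultiPhase.g_lt_of_ne hν' hν'h hν hne).le
  · by_contra hne
    exact (hmin ν' hν').not_gt (MultiPhase.g_lt_of_ne hν' hν'h hμ hne)
end

section
/- Define l₁(ν) = (ν − 1) h₁(ν)/(log(ν)(1 − ν^{−2})) for ν > 1, where h₁(ν) = (4/3)(ν − 1)/ν²; equivalently l₁(ν) = (4/3)(ν − 1)/((ν + 1) log ν). Then l₁ is strictly decreasing on (1, ∞). -/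
/-!
Since `1 - ν⁻² = (ν - 1)(ν + 1)/ν²`, we have `l₁(ν) = (4/3) / u(ν)` with
`u(x) = (x + 1) log x / (x - 1)`. Now `u'(x) = (x - x⁻¹ - 2 log x)/(x - 1)²`, and with
`t = log x > 0` the numerator is `2 (sinh t - t) > 0`; so `u` is positive and strictly increasing
on `(1, ∞)`, and `l₁` strictly decreasing.
-/

open Real Set

theorem Real.two_mul_log_lt_sub_inv {x : ℝ} (hx : 1 < x) : 2 * log x < x - x⁻¹ := by
  have h := self_lt_sinh_iff.mpr (log_pos hx)
  rw [sinh_log (by linarith)] at h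
  linarith

theorem hasDerivAt_add_one_mul_log_div_sub_one {x : ℝ} (hx : 1 < x) :
    HasDerivAt (fun y : ℝ => (y + 1) * log y / (y - 1))
      ((x - x⁻¹ - 2 * log x) / (x - 1) ^ 2) x := by
  have hx0 : x ≠ 0 := by positivity
  have hx1 : x - 1 ≠ 0 := sub_ne_zero.mpr hx.ne'
  have h : HasDerivAt (fun y : ℝ => (y + 1) * log y / (y - 1))
      (((1 * log x + (x + 1) * x⁻¹) * (x - 1) - (x + 1) * log x * 1) / (x - 1) ^ 2) x :=
    (((hasDerivAt_id x).add_const 1).mul (hasDerivAt_log hx0)).div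
      ((hasDerivAt_id x).sub_const 1) hx1
  refine h.congr_deriv ?_
  field_simp
  ring

theorem strictMonoOn_add_one_mul_log_div_sub_one :
    StrictMonoOn (fun x : ℝ => (x + 1) * log x / (x - 1)) (Ioi 1) := by
  refine strictMonoOn_of_hasDerivWithinAt_pos (convex_Ioi 1)
    (f' := fun x => (x - x⁻¹ - 2 * log x) / (x - 1) ^ 2)
    (fun x hx => (hasDerivAt_add_one_mul_log_div_sub_one hx).continuousAt.continuousWithinAt)
    (fun x hx => ?_) (fun x hx => ?_) <;> rw [interior_Ioi] at hx
  · exact (hasDerivAt_add_one_mul_log_div_sub_one hx).hasDerivWithinAt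
  · have := two_mul_log_lt_sub_inv hx
    exact div_pos (by linarith) (pow_pos (sub_pos.mpr hx) 2)

theorem add_one_mul_log_div_sub_one_pos {x : ℝ} (hx : 1 < x) : 0 < (x + 1) * log x / (x - 1) := by
  have := log_pos hx
  exact div_pos (by positivity) (by linarith)

theorem l_one_eq {ν : ℝ} (hν : 1 < ν) :
    (ν - 1) * ((4 / 3) * (ν - 1) / ν ^ 2) / (log ν * (1 - (ν ^ 2)⁻¹))
      = (4 / 3) * (ν - 1) / ((ν + 1) * log ν) := by
  have hν0 : ν ≠ 0 := by positivity
  have hlog : log ν ≠ 0 := (log_pos hν).ne'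
  have hν1 : ν - 1 ≠ 0 := sub_ne_zero.mpr hν.ne'
  have hν1' : ν + 1 ≠ 0 := by linarith
  have hsq : 1 - (ν ^ 2)⁻¹ = (ν - 1) * (ν + 1) / ν ^ 2 := by
    field_simp
    ring
  rw [hsq]
  field_simp

/-- In the Brownian-motion-in-balls model with `d = 1`, the relative variance factor
`l₁(ν) = (ν−1) h₁(ν)/(log ν (1−ν^{−2}))`, with `h₁(ν) = (4/3)(ν−1)/ν²` — equivalently
`l₁(ν) = (4/3)(ν−1)/((ν+1) log ν)` — is strictly decreasing on `(1, ∞)`. -/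
theorem l_one_strictAnti :
    (∀ ν : ℝ, 1 < ν →
      (ν - 1) * ((4 / 3) * (ν - 1) / ν ^ 2) / (Real.log ν * (1 - (ν ^ 2)⁻¹))
        = (4 / 3) * (ν - 1) / ((ν + 1) * Real.log ν)) ∧
    StrictAntiOn
      (fun ν : ℝ => (ν - 1) * ((4 / 3) * (ν - 1) / ν ^ 2) / (Real.log ν * (1 - (ν ^ 2)⁻¹)))
      (Set.Ioi 1) := by
  refine ⟨fun ν hν => l_one_eq hν, fun a ha b hb hab => ?_⟩
  have key := div_lt_div_of_pos_left (by norm_num : (0 : ℝ) < 4 / 3)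
    (add_one_mul_log_div_sub_one_pos ha) (strictMonoOn_add_one_mul_log_div_sub_one ha hb hab)
  simpa only [l_one_eq ha, l_one_eq hb, div_div_eq_mul_div] using key
end
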